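/- arXiv:2404.18853 — 4 statements merged into one kernel-verified Lean document; each statement's English description precedes it below -/
import Mathlib

section
/- For every σ ∈ ℕ∞^ℕ, one has φ̃(σ) = φ̃(g(σ)); that is, φ̃ = φ ∘ g on ℕ∞^ℕ, where φ is the restriction of φ̃ to Σ. -/
open scoped Classical

noncomputable section

/-- `ℕ∞`: the one-point compactification of the positive integers. -/
abbrev NInf : Type := OnePoint ℕ+

/-- View `NInf` as `Option ℕ+`. -/
def toOpt (m : NInf) : Option ℕ+ := m

/-- View `Option ℕ+` as `NInf`. -/
def ofOpt (o : Option ℕ+) : NInf := o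

/-- The reciprocal `1/m`, with the convention `1/∞ = 0`. -/
def rinv (m : NInf) : ℝ :=
  match toOpt m with
  | none => 0
  | some a => 1 / (a : ℝ)

/-- The finite continued fraction `[σ₁, …, σ_k]` computed with the convention `1/∞ = 0`. -/
def cfVal : ℕ → (ℕ → NInf) → ℝ
  | 0, _ => 0
  | k + 1, σ =>
    match toOpt (σ 0) with
    | none => 0
    | some a => 1 / ((a : ℝ) + cfVal k (fun i => σ (i + 1)))

/-- `φ̃(σ) = lim_k [σ₁, …, σ_k]`. -/
def phiTilde (σ : ℕ → NInf) : ℝ := Filter.limUnder Filter.atTop (fun k => cfVal k σ)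

/-- The Gauss map `T̄`, with `T̄(0) = 0`. -/
def Tbar (x : ℝ) : ℝ := if x = 0 then 0 else Int.fract (1 / x)

/-- The first partial quotient `d̄₁(x) = ⌊1/x⌋`, with `d̄₁(0) = ∞`. -/
def dbar (x : ℝ) : NInf := if x = 0 then OnePoint.infty else ((⌊1 / x⌋₊.toPNat' : ℕ+) : NInf)

/-- `f(x) = (d̄₁(x), d̄₂(x), …)`, the sequence of partial quotients (0-indexed:
`cfSeq x k = d̄_{k+1}(x)`). -/
def cfSeq (x : ℝ) : ℕ → NInf := fun k => dbar (Tbar^[k] x)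

/-- `Σ_n`: sequences whose first `n` terms are finite and whose remaining terms are `∞`. -/
def SigmaIdx (n : ℕ) : Set (ℕ → NInf) :=
  {σ | (∀ k < n, σ k ≠ OnePoint.infty) ∧ ∀ k, n ≤ k → σ k = OnePoint.infty}

/-- `Σ_∞ = ℕ^ℕ`: sequences all of whose terms are finite. -/
def SigmaInfSet : Set (ℕ → NInf) := {σ | ∀ k, σ k ≠ OnePoint.infty}

/-- `Σ = Σ_∞ ∪ ⋃ₙ Σ_n` (note `Σ₀ = SigmaIdx 0`). -/
def SigmaSet : Set (ℕ → NInf) := SigmaInfSet ∪ ⋃ n : ℕ, SigmaIdx n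

/-- `σ^{(n)}`: keep the first `n` terms, replace the rest by `∞`. -/
def trunc (n : ℕ) (σ : ℕ → NInf) : ℕ → NInf := fun k => if k < n then σ k else OnePoint.infty

/-- The map `g` forgetting everything after the first `∞`. -/
def gmap (σ : ℕ → NInf) : ℕ → NInf :=
  if h : ∃ k, σ k = OnePoint.infty then trunc (Nat.find h) σ else σ

theorem gmap_mem (σ : ℕ → NInf) : gmap σ ∈ SigmaSet := by
  unfold gmap
  split_ifs with h
  · refine Or.inr (Set.mem_iUnion.mpr ⟨Nat.find h, ?_, ?_⟩)
    · intro k hk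
      simpa [trunc, hk] using Nat.find_min h hk
    · intro k hk
      simp [trunc, Nat.not_lt.mpr hk]
  · exact Or.inl fun k hk => h ⟨k, hk⟩

theorem cfSeq_mem (x : ℝ) : cfSeq x ∈ SigmaSet := by
  by_cases h : ∃ k, Tbar^[k] x = 0
  · refine Or.inr (Set.mem_iUnion.mpr ⟨Nat.find h, ?_, ?_⟩)
    · intro k hk
      have hne : Tbar^[k] x ≠ 0 := Nat.find_min h hk
      simp [cfSeq, dbar, hne]
    · intro k hk
      have h0 : Tbar^[Nat.find h] x = 0 := Nat.find_spec h
      have : Tbar^[k] x = 0 := by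
        have := Function.iterate_add_apply Tbar (k - Nat.find h) (Nat.find h) x
        rw [Nat.sub_add_cancel hk] at this
        rw [this, h0]
        exact Function.iterate_fixed (by simp [Tbar]) _
      simp [cfSeq, dbar, this]
  · refine Or.inl fun k hk => ?_
    have hne : Tbar^[k] x ≠ 0 := fun h0 => h ⟨k, h0⟩
    simp [cfSeq, dbar, hne] at hk

/-- The space `Σ` (as a type). -/
def Sig : Type := {σ : ℕ → NInf // σ ∈ SigmaSet}

def Sig.mk (σ : ℕ → NInf) (h : σ ∈ SigmaSet) : Sig := ⟨σ, h⟩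

def Sig.val (s : Sig) : ℕ → NInf := Subtype.val s

/-- `g`, viewed as a map onto `Σ`. -/
def gS (σ : ℕ → NInf) : Sig := Sig.mk (gmap σ) (gmap_mem σ)

/-- `T_Σ`: the topology on `Σ` coinduced by `g` from the product topology. -/
instance : TopologicalSpace Sig := TopologicalSpace.coinduced gS inferInstance

/-- `f`, viewed as a map into `Σ`. -/
def fS (x : ℝ) : Sig := Sig.mk (cfSeq x) (cfSeq_mem x)

/-- The metric `ρ` on `ℕ∞`. -/
def rho (m n : NInf) : ℝ := if m = n then 0 else rinv m + rinv n

/-- The metric `ρ^ℕ` on `ℕ∞^ℕ`. -/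
def rhoN (σ τ : ℕ → NInf) : ℝ := ∑' k : ℕ, rho (σ k) (τ k) / (Nat.fib (k + 1) : ℝ) ^ 2

/-- Predecessor on `NInf` (finite part). -/
def predNInf (m : NInf) : NInf := ofOpt ((toOpt m).map fun a => a - 1)

/-- The second continued fraction expansion
`(d̄₁(x), …, d̄_{n-1}(x), d̄_n(x) - 1, 1, ∞, ∞, …)` of a rational `x ∈ (0,1)` with
`f(x) ∈ Σ_n`. -/
def tauOf (x : ℝ) (n : ℕ) : ℕ → NInf := fun k =>
  if k + 1 < n then cfSeq x k
  else if k + 1 = n then predNInf (cfSeq x k)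
  else if k = n then ((1 : ℕ+) : NInf)
  else OnePoint.infty

end

/-! The partial continued fraction `[σ₁, …, σ_k]` stops at the first `∞`, because `1/∞ = 0`
cuts off everything after it. Hence `σ` and `g(σ)`, which agree up to and including their first
`∞`, have the same sequence of partial continued fractions, and so the same limit. -/

open OnePoint

lemma cfVal_congr {k : ℕ} {σ τ : ℕ → NInf}
    (h : ∀ i < k, (∀ j < i, σ j ≠ ∞) → σ i = τ i) : cfVal k σ = cfVal k τ := by
  induction k generalizing σ τ with
  | zero => rfl
  | succ k ih =>
    have h0 : σ 0 = τ 0 := h 0 k.succ_pos (by simp)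
    unfold cfVal
    rw [← h0]
    cases ha : toOpt (σ 0) with
    | none => rfl
    | some a =>
      have hfin : σ 0 ≠ ∞ := fun he => by simp only [toOpt, he] at ha; cases ha
      have htail : cfVal k (fun i => σ (i + 1)) = cfVal k (fun i => τ (i + 1)) :=
        ih fun i hi hpre => h (i + 1) (by omega) fun
          | 0, _ => hfin
          | j + 1, hj => hpre j (by omega)
      rw [htail]

lemma gmap_apply_of_forall_lt_ne_infty {σ : ℕ → NInf} {i : ℕ} (hi : ∀ j < i, σ j ≠ ∞) :
    gmap σ i = σ i := by
  unfold gmap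
  split_ifs with h
  · have hle : i ≤ Nat.find h := Nat.le_of_not_lt fun hlt => hi _ hlt (Nat.find_spec h)
    rcases hle.lt_or_eq with hlt | rfl
    · simp [trunc, hlt]
    · simp [trunc, Nat.find_spec h]
  · rfl

lemma cfVal_gmap (k : ℕ) (σ : ℕ → NInf) : cfVal k (gmap σ) = cfVal k σ :=
  (cfVal_congr (σ := σ) fun _ _ hi => (gmap_apply_of_forall_lt_ne_infty hi).symm).symm

/-- `φ̃ = φ ∘ g` on `ℕ∞^ℕ`, i.e. `φ̃(σ) = φ̃(g(σ))` for every `σ`. -/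
theorem stmt7 : ∀ σ : ℕ → NInf, phiTilde σ = phiTilde (gmap σ) := by
  intro σ
  simp only [phiTilde, cfVal_gmap]
end

section
/- The set R_g = {(σ, τ) ∈ ℕ∞^ℕ × ℕ∞^ℕ : g(σ) = g(τ)} is closed in the product space ℕ∞^ℕ × ℕ∞^ℕ (where ℕ∞^ℕ carries the product topology). -/
open scoped Classical

/-!
`g σ = g τ` holds exactly when `σ k = τ k` for every `k` before which all terms of `σ` and `τ`
are finite: both sequences then hit their first `∞` at the same index. For fixed `k` this is an
implication from an open condition (finitely many coordinates avoid the closed point `∞`) to a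
closed one (the diagonal of the Hausdorff space `ℕ∞`), so `R_g` is an intersection of closed sets.
-/

open OnePoint

lemma gmap_apply (σ : ℕ → NInf) (k : ℕ) :
    gmap σ k = if ∀ j < k, σ j ≠ ∞ then σ k else ∞ := by
  unfold gmap
  split_ifs with hex hfin hfin
  · have hk : k ≤ Nat.find hex := (Nat.le_find_iff hex k).mpr fun j hj => hfin j hj
    rcases hk.lt_or_eq with hlt | rfl
    · simp [trunc, hlt]
    · simpa [trunc] using (Nat.find_spec hex).symm
  · have hk : ¬ k < Nat.find hex := fun hlt =>
      hfin fun j hj => Nat.find_min hex (hj.trans hlt)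
    simp [trunc, hk]
  · rfl
  · exact (hfin fun j _ hj => hex ⟨j, hj⟩).elim

lemma forall_lt_ne_infty_iff {σ τ : ℕ → NInf}
    (h : ∀ k, (∀ j < k, σ j ≠ ∞ ∧ τ j ≠ ∞) → σ k = τ k) (k : ℕ) :
    (∀ j < k, σ j ≠ ∞) ↔ (∀ j < k, τ j ≠ ∞) := by
  induction k with
  | zero => simp
  | succ k ih =>
    simp only [Nat.forall_lt_succ_right]
    by_cases hσ : ∀ j < k, σ j ≠ ∞
    · have hτ := ih.mp hσ
      rw [h k fun j hj => ⟨hσ j hj, hτ j hj⟩]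
      tauto
    · have hτ := mt ih.mpr hσ
      tauto

lemma gmap_eq_gmap_iff (σ τ : ℕ → NInf) :
    gmap σ = gmap τ ↔ ∀ k, (∀ j < k, σ j ≠ ∞ ∧ τ j ≠ ∞) → σ k = τ k := by
  constructor
  · intro hg k hfin
    have := congrFun hg k
    rwa [gmap_apply, gmap_apply, if_pos fun j hj => (hfin j hj).1,
      if_pos fun j hj => (hfin j hj).2] at this
  · intro h
    funext k
    have hiff := forall_lt_ne_infty_iff h k
    rw [gmap_apply, gmap_apply]
    by_cases hτ : ∀ j < k, τ j ≠ ∞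
    · rw [if_pos (hiff.mpr hτ), if_pos hτ]
      exact h k fun j hj => ⟨hiff.mpr hτ j hj, hτ j hj⟩
    · rw [if_neg (mt hiff.mp hτ), if_neg hτ]

lemma isOpen_setOf_forall_lt_ne_infty (k : ℕ) :
    IsOpen {p : (ℕ → NInf) × (ℕ → NInf) | ∀ j < k, p.1 j ≠ ∞ ∧ p.2 j ≠ ∞} := by
  simp only [Set.ofPred_forall]
  refine (Set.finite_Iio k).isOpen_biInter fun j _ => ?_
  exact (isOpen_ne.preimage ((continuous_apply j).comp continuous_fst)).inter
    (isOpen_ne.preimage ((continuous_apply j).comp continuous_snd))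

/-- The graph `R_g = {(σ, τ) : g(σ) = g(τ)}` is closed in
`ℕ∞^ℕ × ℕ∞^ℕ` with the product topology. -/
theorem stmt10 :
    IsClosed {p : (ℕ → NInf) × (ℕ → NInf) | gmap p.1 = gmap p.2} := by
  have hR : {p : (ℕ → NInf) × (ℕ → NInf) | gmap p.1 = gmap p.2} =
      ⋂ k, {p | (∀ j < k, p.1 j ≠ ∞ ∧ p.2 j ≠ ∞) → p.1 k = p.2 k} := by
    ext p
    simp only [Set.mem_ofPred_eq, Set.mem_iInter, gmap_eq_gmap_iff]
  rw [hR]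
  exact isClosed_iInter fun k => isClosed_imp (isOpen_setOf_forall_lt_ne_infty k)
    (isClosed_eq ((continuous_apply k).comp continuous_fst)
      ((continuous_apply k).comp continuous_snd))
end

section
/- The topological space (Σ, T_Σ) is compact, Hausdorff, and metrizable. -/
open scoped Classical

/-!
`Σ` is the continuous image of the compact space `ℕ∞^ℕ` under `g`, hence compact. It embeds
continuously and injectively into `ℝ^ℕ` via `s ↦ (∏_{i<n} 1/sᵢ)ₙ`: the partial products are
insensitive to what `g` erases after the first `∞` (they vanish from there on), so they are
continuous for the coinduced topology, and since `1/·` is injective on `ℕ∞` and vanishes only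
at `∞`, they recover the sequence term by term. A continuous injection of a compact space into
a metrizable space is a closed embedding, so `Σ` is Hausdorff and metrizable.
-/

open Finset

lemma rinv_infty : rinv OnePoint.infty = 0 := rfl

lemma rinv_coe (a : ℕ+) : rinv (a : NInf) = 1 / (a : ℝ) := rfl

lemma rinv_injective : Function.Injective rinv := by
  intro m n h
  induction m using OnePoint.rec <;> induction n using OnePoint.rec
  · rfl
  · exact absurd h.symm (by simp [rinv_infty, rinv_coe])
  · exact absurd h (by simp [rinv_infty, rinv_coe])
  · simp_all [rinv_coe]

lemma rinv_eq_zero_iff {m : NInf} : rinv m = 0 ↔ m = OnePoint.infty :=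
  rinv_injective.eq_iff' rinv_infty

lemma continuous_rinv : Continuous rinv := by
  rw [OnePoint.continuous_iff_from_discrete]
  have hcoe : Filter.Tendsto ((↑) : ℕ+ → ℕ) Filter.cofinite Filter.atTop :=
    Nat.cofinite_eq_atTop ▸ PNat.coe_injective.tendsto_cofinite
  exact (tendsto_one_div_atTop_nhds_zero_nat (𝕜 := ℝ)).comp hcoe

lemma eq_infty_of_le_of_mem_SigmaSet {σ : ℕ → NInf} (hσ : σ ∈ SigmaSet) {i k : ℕ}
    (hik : i ≤ k) (hi : σ i = OnePoint.infty) : σ k = OnePoint.infty := by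
  rcases hσ with hfin | hσ
  · exact absurd hi (hfin i)
  · obtain ⟨n, hlt, hge⟩ := Set.mem_iUnion.mp hσ
    exact hge k (le_trans (not_lt.mp fun hin => hlt i hin hi) hik)

lemma gmap_eq_self {σ : ℕ → NInf} (hσ : σ ∈ SigmaSet) : gmap σ = σ := by
  unfold gmap
  split_ifs with h
  · funext k
    by_cases hk : k < Nat.find h
    · simp [trunc, hk]
    · simp [trunc, hk,
        eq_infty_of_le_of_mem_SigmaSet hσ (not_lt.mp hk) (Nat.find_spec h)]
  · rfl

lemma gS_surjective : Function.Surjective gS :=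
  fun s => ⟨s.val, Subtype.ext (gmap_eq_self s.2)⟩

lemma prod_rinv_gmap (σ : ℕ → NInf) (n : ℕ) :
    ∏ i ∈ range n, rinv (gmap σ i) = ∏ i ∈ range n, rinv (σ i) := by
  unfold gmap
  split_ifs with h
  · by_cases hn : n ≤ Nat.find h
    · exact prod_congr rfl fun i hi => by simp [trunc, (mem_range.mp hi).trans_le hn]
    · have hmem : Nat.find h ∈ range n := mem_range.mpr (not_le.mp hn)
      rw [prod_eq_zero hmem (by simp [trunc, rinv_infty]),
        prod_eq_zero hmem (rinv_eq_zero_iff.mpr (Nat.find_spec h))]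
  · rfl

namespace Sig

noncomputable def prodRinv (s : Sig) (n : ℕ) : ℝ := ∏ i ∈ range n, rinv (s.val i)

lemma continuous_prodRinv : Continuous prodRinv := by
  refine continuous_coinduced_dom.mpr (continuous_pi fun n => ?_)
  change Continuous fun σ => ∏ i ∈ range n, rinv (gmap σ i)
  simp only [prod_rinv_gmap]
  exact continuous_finsetProd _ fun i _ => continuous_rinv.comp (continuous_apply i)

lemma prodRinv_injective : Function.Injective prodRinv := by
  intro s t hst
  suffices h : ∀ n, ∀ i < n, s.val i = t.val i from
    Subtype.ext (funext fun i => h (i + 1) i i.lt_succ_self)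
  intro n
  induction n with
  | zero => simp
  | succ n ih =>
    suffices s.val n = t.val n from fun i hi =>
      (Nat.lt_succ_iff_lt_or_eq.mp hi).elim (ih i) (· ▸ this)
    have hprefix : prodRinv s n = prodRinv t n :=
      prod_congr rfl fun i hi => by rw [ih i (mem_range.mp hi)]
    have hnext : prodRinv s n * rinv (s.val n) = prodRinv t n * rinv (t.val n) := by
      simpa only [prodRinv, prod_range_succ] using congrFun hst (n + 1)
    by_cases hzero : prodRinv s n = 0
    · obtain ⟨i, hi, hsi⟩ := prod_eq_zero_iff.mp hzero
      rw [mem_range] at hi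
      rw [rinv_eq_zero_iff] at hsi
      have hsn : s.val n = OnePoint.infty := eq_infty_of_le_of_mem_SigmaSet s.2 hi.le hsi
      have htn : t.val n = OnePoint.infty :=
        eq_infty_of_le_of_mem_SigmaSet t.2 hi.le ((ih i hi).symm.trans hsi)
      exact hsn.trans htn.symm
    · rw [hprefix] at hnext hzero
      exact rinv_injective (mul_left_cancel₀ hzero hnext)

end Sig

/-- `(Σ, T_Σ)` is compact, Hausdorff and metrizable. -/
theorem stmt11 : CompactSpace Sig ∧ T2Space Sig ∧ TopologicalSpace.MetrizableSpace Sig := by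
  have hcompact : CompactSpace Sig := by
    rw [← isCompact_univ_iff, ← gS_surjective.range_eq]
    exact isCompact_range continuous_coinduced_rng
  have hembed := Sig.continuous_prodRinv.isClosedEmbedding Sig.prodRinv_injective
  exact ⟨hcompact, T2Space.of_injective_continuous Sig.prodRinv_injective
    Sig.continuous_prodRinv, hembed.isEmbedding.metrizableSpace⟩
end

section
/- Fix n ∈ ℕ and σ ∈ Σ_n, and let Υ_σ = {υ ∈ Σ : υ^{(n)} = σ} be the cylinder set associated with σ. Then Υ_σ is a compact subset of (Σ, T_Σ). -/
open scoped Classical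

/-! The cylinder is the image under the continuous map `g` of the cylinder
`{τ | τ k = σ k for k < n}` of `ℕ∞^ℕ`, which is closed in a compact space. That `g` maps this
cylinder onto `Υ_σ` uses that `σ k ≠ ∞` for `k < n`, so `g` does not cut a sequence of the
cylinder before position `n`, and that `g` fixes every point of `Σ`. -/

open Set

theorem isCompact_setOf_forall_lt_eq {X : Type*} [TopologicalSpace X] [CompactSpace X]
    [T1Space X] (n : ℕ) (σ : ℕ → X) : IsCompact {τ : ℕ → X | ∀ k < n, τ k = σ k} := by
  refine IsClosed.isCompact ?_
  simp only [ofPred_forall]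
  exact isClosed_iInter fun k => isClosed_iInter fun _ =>
    isClosed_singleton.preimage (continuous_apply k)

theorem trunc_trunc_of_le {m n : ℕ} (h : n ≤ m) (τ : ℕ → NInf) :
    trunc n (trunc m τ) = trunc n τ := by
  funext k
  by_cases hk : k < n
  · simp [trunc, hk, hk.trans_le h]
  · simp [trunc, hk]

theorem trunc_gmap_of_forall_lt_ne {n : ℕ} {τ : ℕ → NInf}
    (hτ : ∀ k < n, τ k ≠ OnePoint.infty) : trunc n (gmap τ) = trunc n τ := by
  unfold gmap
  split_ifs with h
  · exact trunc_trunc_of_le ((Nat.le_find_iff h n).2 hτ) τ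
  · rfl

theorem gmap_eq_self_of_mem {υ : ℕ → NInf} (h : υ ∈ SigmaSet) : gmap υ = υ := by
  rcases h with h | h
  · simp only [gmap, dif_neg (not_exists.2 h)]
  · obtain ⟨m, hfin, hinf⟩ := mem_iUnion.1 h
    have hex : ∃ k, υ k = OnePoint.infty := ⟨m, hinf m le_rfl⟩
    have hfind : Nat.find hex = m :=
      le_antisymm (Nat.find_le (hinf m le_rfl)) ((Nat.le_find_iff hex m).2 hfin)
    funext k
    simp only [gmap, dif_pos hex, hfind, trunc]
    split_ifs with hk
    · rfl
    · exact (hinf k (not_lt.1 hk)).symm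

theorem gS_val (υ : Sig) : gS υ.val = υ :=
  Subtype.ext (gmap_eq_self_of_mem υ.property)

theorem trunc_eq_iff_of_mem_SigmaIdx {n : ℕ} {σ : ℕ → NInf} (hσ : σ ∈ SigmaIdx n)
    (τ : ℕ → NInf) : trunc n τ = σ ↔ ∀ k < n, τ k = σ k := by
  refine ⟨fun h k hk => by simpa [trunc, hk] using congrFun h k, fun h => funext fun k => ?_⟩
  by_cases hk : k < n
  · simp [trunc, hk, h k hk]
  · simp [trunc, hk, hσ.2 k (not_lt.1 hk)]

theorem stmt13_general (n : ℕ) (σ : ℕ → NInf) (hσ : σ ∈ SigmaIdx n) :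
    IsCompact {υ : Sig | trunc n (Sig.val υ) = σ} := by
  have himage : {υ : Sig | trunc n (Sig.val υ) = σ}
      = gS '' {τ : ℕ → NInf | ∀ k < n, τ k = σ k} := by
    ext υ
    constructor
    · intro hυ
      exact ⟨υ.val, (trunc_eq_iff_of_mem_SigmaIdx hσ _).1 hυ, gS_val υ⟩
    · rintro ⟨τ, hτ, rfl⟩
      have hfin : ∀ k < n, τ k ≠ OnePoint.infty := fun k hk => hτ k hk ▸ hσ.1 k hk
      change trunc n (gmap τ) = σ
      rw [trunc_gmap_of_forall_lt_ne hfin, trunc_eq_iff_of_mem_SigmaIdx hσ]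
      exact hτ
  rw [himage]
  exact (isCompact_setOf_forall_lt_eq n σ).image continuous_coinduced_rng

/-- For `n ∈ ℕ` and `σ ∈ Σ_n`, the cylinder set
`Υ_σ = {υ ∈ Σ : υ^{(n)} = σ}` is compact in `(Σ, T_Σ)`. -/
theorem stmt13 (n : ℕ) (hn : 0 < n) (σ : ℕ → NInf) (hσ : σ ∈ SigmaIdx n) :
    IsCompact {υ : Sig | trunc n (Sig.val υ) = σ} :=
  stmt13_general n σ hσ
end
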